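/- If S' is obtained from S by dilating all time displacements by a positive integer c, and λ(S) = lim_{n→∞} V_n(S)^{1/n} exists and is ≥ 1, then λ(S') exists and λ(S') = λ(S). -/

import Mathlib

open Filter

/-- A voice of a canonic scheme: time displacement `t`, pitch displacement `p`
(mod 7), and whether it is the marked bass voice. -/
structure Voice where
  t : ℤ
  p : ZMod 7
  bass : Bool

/-- A melody `x` (0-indexed: `x k` is the (k+1)-st note) of length `n` is a valid
canon for the scheme `S`: for any two voices sounding simultaneously, the
difference is not a second or seventh `{1,6}`, and not a fourth `3` above a
marked bass. -/
def ValidOn (S : List Voice) (n : ℕ) (x : ℕ → ZMod 7) : Prop :=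
  ∀ vi ∈ S, ∀ vj ∈ S, ∀ a b : ℕ, a < n → b < n →
    (a : ℤ) + vi.t = (b : ℤ) + vj.t →
    ((x a + vi.p) - (x b + vj.p) ∉ ({1, 6} : Set (ZMod 7)) ∧
     (vj.bass = true → (x a + vi.p) - (x b + vj.p) ≠ 3))

/-- `V S n` is the number of valid `n`-note canons for the scheme `S`
(melodies normalized to be `0` beyond position `n`). -/
noncomputable def V (S : List Voice) (n : ℕ) : ℕ :=
  Nat.card {x : ℕ → ZMod 7 // ValidOn S n x ∧ ∀ k, n ≤ k → x k = 0}

/-! Under time dilation by `c`, two notes can sound together only if their positions are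
congruent mod `c`, so a valid canon for the dilated scheme is a `c`-tuple of independent valid
canons for `S`, one on each residue class of positions. For `n = q c + ℓ` this gives
`V_n(S') = V_{q+1}(S)^ℓ V_q(S)^(c-ℓ)`, whose `n`-th root is the weighted geometric mean of
`V_{q+1}(S)^(1/(q+1))` and `V_q(S)^(1/q)` with weights `(q+1)ℓ/n` and `q(c-ℓ)/n`. It is therefore
squeezed between their minimum and maximum, both of which tend to `λ(S)`. -/

open Topology

namespace Real

lemma min_le_rpow_mul_rpow {x y α β : ℝ} (hx : 0 ≤ x) (hy : 0 ≤ y) (hα : 0 ≤ α) (hβ : 0 ≤ β)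
    (hαβ : α + β = 1) : min x y ≤ x ^ α * y ^ β :=
  calc min x y = min x y ^ α * min x y ^ β := by
        rw [← rpow_add' (le_min hx hy) (by simp [hαβ]), hαβ, rpow_one]
    _ ≤ x ^ α * y ^ β := by gcongr <;> simp

lemma rpow_mul_rpow_le_max {x y α β : ℝ} (hx : 0 ≤ x) (hy : 0 ≤ y) (hα : 0 ≤ α) (hβ : 0 ≤ β)
    (hαβ : α + β = 1) : x ^ α * y ^ β ≤ max x y :=
  calc x ^ α * y ^ β ≤ max x y ^ α * max x y ^ β := by gcongr <;> simp
    _ = max x y := by rw [← rpow_add' (hx.trans (le_max_left x y)) (by simp [hαβ]), hαβ, rpow_one]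

lemma pow_mul_pow_rpow_one_div {x y : ℝ} (hx : 0 ≤ x) (hy : 0 ≤ y) {p q : ℝ} (hp : p ≠ 0)
    (hq : q ≠ 0) (i j : ℕ) :
    (x ^ i * y ^ j) ^ (1 / (p * i + q * j)) =
      (x ^ (1 / p)) ^ (p * i / (p * i + q * j)) * (y ^ (1 / q)) ^ (q * j / (p * i + q * j)) := by
  rw [mul_rpow (by positivity) (by positivity), ← rpow_natCast, ← rpow_natCast, ← rpow_mul hx,
    ← rpow_mul hx, ← rpow_mul hy, ← rpow_mul hy]
  congr 2 <;> field_simp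

end Real

lemma Nat.div_add_one_mul_mod_add_div_mul_sub_mod (n : ℕ) {c : ℕ} (hc : 0 < c) :
    (n / c + 1) * (n % c) + n / c * (c - n % c) = n := by
  have hl : n % c ≤ c := (Nat.mod_lt n hc).le
  have hn := Nat.div_add_mod' n c
  zify [hl] at hn ⊢
  linear_combination hn

theorem tendsto_pow_mul_pow_rpow_one_div {u : ℕ → ℝ} (hu : ∀ k, 0 ≤ u k) {L : ℝ}
    (h : Tendsto (fun k : ℕ => u k ^ (1 / (k : ℝ))) atTop (𝓝 L)) {c : ℕ} (hc : 0 < c) :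
    Tendsto (fun n : ℕ => (u (n / c + 1) ^ (n % c) * u (n / c) ^ (c - n % c)) ^ (1 / (n : ℝ)))
      atTop (𝓝 L) := by
  set a := fun k : ℕ => u k ^ (1 / (k : ℝ))
  have ha : ∀ k, 0 ≤ a k := fun k => Real.rpow_nonneg (hu k) _
  have hdiv : Tendsto (· / c) atTop atTop := Nat.tendsto_div_const_atTop hc.ne'
  have hdiv1 : Tendsto (fun n => n / c + 1) atTop atTop := (tendsto_add_atTop_nat 1).comp hdiv
  have hmin : Tendsto (fun n => min (a (n / c + 1)) (a (n / c))) atTop (𝓝 L) := by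
    simpa using (h.comp hdiv1).min (h.comp hdiv)
  have hmax : Tendsto (fun n => max (a (n / c + 1)) (a (n / c))) atTop (𝓝 L) := by
    simpa using (h.comp hdiv1).max (h.comp hdiv)
  have hmean : ∀ᶠ n : ℕ in atTop, ∃ α β : ℝ, 0 ≤ α ∧ 0 ≤ β ∧ α + β = 1 ∧
      (u (n / c + 1) ^ (n % c) * u (n / c) ^ (c - n % c)) ^ (1 / (n : ℝ)) =
        a (n / c + 1) ^ α * a (n / c) ^ β := by
    filter_upwards [eventually_ge_atTop c] with n hn
    have hq : ((n / c : ℕ) : ℝ) ≠ 0 := by exact_mod_cast (Nat.div_pos hn hc).ne'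
    have hn0 : (n : ℝ) ≠ 0 := by exact_mod_cast (hc.trans_le hn).ne'
    have hN : ((n / c + 1 : ℕ) : ℝ) * (n % c : ℕ) + (n / c : ℕ) * (c - n % c : ℕ) = n := by
      exact_mod_cast Nat.div_add_one_mul_mod_add_div_mul_sub_mod n hc
    rw [← hN, Real.pow_mul_pow_rpow_one_div (hu _) (hu _) (by positivity) hq]
    refine ⟨_, _, by positivity, by positivity, ?_, rfl⟩
    rw [← add_div, hN, div_self hn0]
  refine tendsto_of_tendsto_of_tendsto_of_le_of_le' hmin hmax ?_ ?_
  · filter_upwards [hmean] with n ⟨α, β, hα, hβ, hαβ, he⟩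
    rw [he]
    exact Real.min_le_rpow_mul_rpow (ha _) (ha _) hα hβ hαβ
  · filter_upwards [hmean] with n ⟨α, β, hα, hβ, hαβ, he⟩
    rw [he]
    exact Real.rpow_mul_rpow_le_max (ha _) (ha _) hα hβ hαβ

def Voice.dilate (c : ℕ) (v : Voice) : Voice := ⟨c * v.t, v.p, v.bass⟩

def strandLength (c n : ℕ) (r : Fin c) : ℕ := if (r : ℕ) < n % c then n / c + 1 else n / c

lemma lt_iff_lt_strandLength {c n k : ℕ} (r : Fin c) :
    k * c + r < n ↔ k < strandLength c n r := by
  have hn := Nat.div_add_mod' n c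
  have hl := Nat.mod_lt n r.pos
  have hr := r.isLt
  unfold strandLength
  split_ifs with h
  · constructor
    · intro hk
      by_contra! hk'
      have : (n / c + 1) * c ≤ k * c := Nat.mul_le_mul_right c hk'
      linarith
    · intro hk
      have : k * c ≤ n / c * c := Nat.mul_le_mul_right c (Nat.lt_succ_iff.1 hk)
      linarith
  · constructor
    · intro hk
      by_contra! hk'
      have : n / c * c ≤ k * c := Nat.mul_le_mul_right c hk'
      linarith
    · intro hk
      have : (k + 1) * c ≤ n / c * c := Nat.mul_le_mul_right c hk
      linarith [Nat.zero_le (n % c)]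

def strandEquiv (α : Type*) (c : ℕ) [NeZero c] : (ℕ → α) ≃ (Fin c → ℕ → α) :=
  ((Nat.divModEquiv c).arrowCongr (Equiv.refl α)).trans
    ((Equiv.curry ℕ (Fin c) α).trans (Equiv.piComm _))

@[simp] lemma strandEquiv_apply {α : Type*} {c : ℕ} [NeZero c] (x : ℕ → α) (r : Fin c) (k : ℕ) :
    strandEquiv α c x r k = x (k * c + r) := rfl

lemma eq_and_add_eq_of_mul_add_eq {c : ℕ} {a b : ℕ} {r r' : Fin c} {s t : ℤ}
    (h : ((a * c + r : ℕ) : ℤ) + c * s = (b * c + r' : ℕ) + c * t) :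
    r = r' ∧ (a : ℤ) + s = b + t := by
  have hc : (0 : ℤ) < c := by exact_mod_cast r.pos
  have hdiff : (r : ℤ) - r' = c * (b + t - a - s) := by push_cast at h; linear_combination h
  have hrr : (r : ℤ) - r' = 0 :=
    Int.eq_zero_of_abs_lt_dvd ⟨_, hdiff⟩ (by rw [abs_lt]; omega)
  refine ⟨Fin.ext (by omega), ?_⟩
  rw [hrr, eq_comm, mul_eq_zero] at hdiff
  have := hdiff.resolve_left hc.ne'
  linarith

section Dilation

variable {c : ℕ} [NeZero c]

lemma validOn_map_dilate_iff {S : List Voice} {n : ℕ} {x : ℕ → ZMod 7} :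
    ValidOn (S.map (Voice.dilate c)) n x ↔
      ∀ r : Fin c, ValidOn S (strandLength c n r) (strandEquiv (ZMod 7) c x r) := by
  constructor
  · intro hx r vi hvi vj hvj a b ha hb ht
    exact hx _ (List.mem_map_of_mem hvi) _ (List.mem_map_of_mem hvj) (a * c + r) (b * c + r)
      ((lt_iff_lt_strandLength r).2 ha) ((lt_iff_lt_strandLength r).2 hb)
      (by simp only [Voice.dilate]; push_cast; linear_combination (c : ℤ) * ht)
  · intro hx
    simp only [ValidOn, List.forall_mem_map]
    intro vi hvi vj hvj a b ha hb ht
    obtain ⟨⟨a, r⟩, rfl⟩ := (Nat.divModEquiv c).symm.surjective a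
    obtain ⟨⟨b, r'⟩, rfl⟩ := (Nat.divModEquiv c).symm.surjective b
    simp only [Nat.divModEquiv_symm_apply, Voice.dilate] at ha hb ht ⊢
    obtain ⟨rfl, hab⟩ := eq_and_add_eq_of_mul_add_eq ht
    exact hx r vi hvi vj hvj a b ((lt_iff_lt_strandLength r).1 ha)
      ((lt_iff_lt_strandLength r).1 hb) hab

lemma forall_ge_eq_zero_iff_strandEquiv {α : Type*} [Zero α] {n : ℕ} {x : ℕ → α} :
    (∀ k, n ≤ k → x k = 0) ↔
      ∀ r : Fin c, ∀ k, strandLength c n r ≤ k → strandEquiv α c x r k = 0 := by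
  rw [(Nat.divModEquiv c).forall_congr_left, Prod.forall, forall_comm]
  simp only [Nat.divModEquiv_symm_apply, strandEquiv_apply, ← not_lt, ← lt_iff_lt_strandLength]

lemma V_map_dilate_eq_prod (S : List Voice) (n : ℕ) :
    V (S.map (Voice.dilate c)) n = ∏ r : Fin c, V S (strandLength c n r) := by
  simp only [V]
  rw [← Nat.card_pi]
  refine Nat.card_congr
    (((strandEquiv (ZMod 7) c).subtypeEquiv fun x => ?_).trans Equiv.subtypePiEquivPi)
  rw [validOn_map_dilate_iff, forall_ge_eq_zero_iff_strandEquiv (c := c), ← forall_and]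

lemma V_map_dilate_eq (S : List Voice) (n : ℕ) :
    V (S.map (Voice.dilate c)) n = V S (n / c + 1) ^ (n % c) * V S (n / c) ^ (c - n % c) := by
  have hl : n % c ≤ c := (Nat.mod_lt n (NeZero.pos c)).le
  simp only [V_map_dilate_eq_prod, strandLength, apply_ite (V S), Finset.prod_ite,
    Finset.prod_const, Finset.filter_not, Finset.card_sdiff, Finset.inter_univ,
    Fin.card_filter_val_lt, Finset.card_univ, Fintype.card_fin, min_eq_right hl]

end Dilation

theorem time_dilation_flexibility_general (S : List Voice) (c : ℕ) (hc : 0 < c)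
    (L : ℝ)
    (h : Tendsto (fun n : ℕ => (V S n : ℝ) ^ (1 / (n : ℝ))) atTop (nhds L)) :
    Tendsto (fun n : ℕ =>
      (V (S.map fun v => ⟨(c : ℤ) * v.t, v.p, v.bass⟩) n : ℝ) ^ (1 / (n : ℝ)))
      atTop (nhds L) := by
  have : NeZero c := ⟨hc.ne'⟩
  have hV := tendsto_pow_mul_pow_rpow_one_div (fun k => Nat.cast_nonneg (V S k)) h hc
  refine hV.congr fun n => ?_
  rw [← Nat.cast_pow, ← Nat.cast_pow, ← Nat.cast_mul, ← V_map_dilate_eq]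
  rfl

/-- time dilation by a positive integer preserves the flexibility. -/
theorem time_dilation_flexibility (S : List Voice) (c : ℕ) (hc : 0 < c)
    (L : ℝ) (hL : 1 ≤ L)
    (h : Tendsto (fun n : ℕ => (V S n : ℝ) ^ (1 / (n : ℝ))) atTop (nhds L)) :
    Tendsto (fun n : ℕ =>
      (V (S.map fun v => ⟨(c : ℤ) * v.t, v.p, v.bass⟩) n : ℝ) ^ (1 / (n : ℝ)))
      atTop (nhds L) :=
  time_dilation_flexibility_general S c hc L h
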